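/- For all natural numbers p and a with 2p ≥ 3a, H₀(p + 2, a + 1) = H₀(p, a). Consequently, for every n ≥ 0 the value H₀(2a − n, a) does not depend on a as long as a ≥ 2n. -/
import Mathlib

/-- The number of covering pairs (arcs of the Hasse diagram) of a partial order `P`. -/
noncomputable def nCovers {α : Type*} (P : PartialOrder α) : ℕ :=
  letI := P
  Nat.card {q : α × α // q.1 ⋖ q.2}

/-- `P` has no isolated points: every element belongs to some covering pair. -/
def NoIsolated {α : Type*} (P : PartialOrder α) : Prop :=
  letI := P
  ∀ x : α, ∃ y, x ⋖ y ∨ y ⋖ x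

/-- Two partial orders on `Fin p` are equivalent iff they are order-isomorphic. -/
def posetIsoSetoid (p : ℕ) : Setoid (PartialOrder (Fin p)) where
  r P Q := Nonempty (@OrderIso (Fin p) (Fin p) P.toPreorder.toLE Q.toPreorder.toLE)
  iseqv := by
    refine ⟨fun P => ⟨@OrderIso.refl _ P.toPreorder.toLE⟩, ?_, ?_⟩
    · rintro P Q ⟨e⟩
      exact ⟨@OrderIso.symm _ _ P.toPreorder.toLE Q.toPreorder.toLE e⟩
    · rintro P Q R ⟨e⟩ ⟨f⟩
      exact ⟨@OrderIso.trans _ _ _ P.toPreorder.toLE Q.toPreorder.toLE R.toPreorder.toLE e f⟩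

/-- `H p a`: the number of isomorphism classes of partial orders on `Fin p`
with exactly `a` covering pairs. -/
noncomputable def H (p a : ℕ) : ℕ :=
  Nat.card (Quotient ((posetIsoSetoid p).comap
    (Subtype.val : {P : PartialOrder (Fin p) // nCovers P = a} → PartialOrder (Fin p))))

/-- `H0 p a`: the number of isomorphism classes of partial orders on `Fin p`
with exactly `a` covering pairs and no isolated point. -/
noncomputable def H0 (p a : ℕ) : ℕ :=
  Nat.card (Quotient ((posetIsoSetoid p).comap
    (Subtype.val : {P : PartialOrder (Fin p) // nCovers P = a ∧ NoIsolated P} →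
      PartialOrder (Fin p))))

open Sum

section Helpers

variable {α β γ δ : Type*}

/-! ### Transfer of `nCovers` and `NoIsolated` along order isomorphisms -/

/-- Covering pairs are preserved by order isomorphisms. -/
def coversEquiv [PartialOrder α] [PartialOrder β] (e : α ≃o β) :
    {q : α × α // q.1 ⋖ q.2} ≃ {q : β × β // q.1 ⋖ q.2} :=
  Equiv.subtypeEquiv (Equiv.prodCongr e.toEquiv e.toEquiv)
    (fun q => (apply_covBy_apply_iff e).symm)

lemma nCovers_congr [iα : PartialOrder α] [iβ : PartialOrder β] (e : α ≃o β) :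
    nCovers iα = nCovers iβ :=
  Nat.card_congr (coversEquiv e)

lemma noIsolated_congr [iα : PartialOrder α] [iβ : PartialOrder β] (e : α ≃o β) :
    NoIsolated iα ↔ NoIsolated iβ := by
  constructor
  · intro h x
    obtain ⟨y, hy | hy⟩ := h (e.symm x)
    · exact ⟨e y, Or.inl (by simpa using (apply_covBy_apply_iff e).2 hy)⟩
    · exact ⟨e y, Or.inr (by simpa using (apply_covBy_apply_iff e).2 hy)⟩
  · intro h x
    obtain ⟨y, hy | hy⟩ := h (e x)
    · exact ⟨e.symm y, Or.inl (by simpa using (apply_covBy_apply_iff e.symm).2 hy)⟩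
    · exact ⟨e.symm y, Or.inr (by simpa using (apply_covBy_apply_iff e.symm).2 hy)⟩

/-! ### Covers in a disjoint sum -/

variable [PartialOrder α] [PartialOrder β]

@[simp] lemma inl_covBy_inl_iff {a b : α} : (inl a : α ⊕ β) ⋖ inl b ↔ a ⋖ b := by
  constructor
  · rintro ⟨h1, h2⟩
    refine ⟨by simpa using h1, fun c hc hcb => ?_⟩
    exact h2 (show (inl a : α ⊕ β) < inl c by simpa) (by simpa)
  · rintro ⟨h1, h2⟩
    refine ⟨by simpa using h1, ?_⟩
    rintro (c | c) hc hcb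
    · exact h2 (by simpa using hc) (by simpa using hcb)
    · exact absurd hc (by simp)

@[simp] lemma inr_covBy_inr_iff {a b : β} : (inr a : α ⊕ β) ⋖ inr b ↔ a ⋖ b := by
  constructor
  · rintro ⟨h1, h2⟩
    refine ⟨by simpa using h1, fun c hc hcb => ?_⟩
    exact h2 (show (inr a : α ⊕ β) < inr c by simpa) (by simpa)
  · rintro ⟨h1, h2⟩
    refine ⟨by simpa using h1, ?_⟩
    rintro (c | c) hc hcb
    · exact absurd hc (by simp)
    · exact h2 (by simpa using hc) (by simpa using hcb)

lemma not_inl_covBy_inr {a : α} {b : β} : ¬ (inl a : α ⊕ β) ⋖ inr b :=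
  fun h => absurd h.lt (by simp)

lemma not_inr_covBy_inl {a : α} {b : β} : ¬ (inr b : α ⊕ β) ⋖ inl a :=
  fun h => absurd h.lt (by simp)

end Helpers

section Sum2
variable {α β : Type*} [iα : PartialOrder α] [iβ : PartialOrder β]

def sumCoversMap :
    ({q : α × α // q.1 ⋖ q.2} ⊕ {q : β × β // q.1 ⋖ q.2}) →
      {q : (α ⊕ β) × (α ⊕ β) // q.1 ⋖ q.2} := fun x =>
  match x with
  | .inl ⟨(a, b), h⟩ => ⟨(inl a, inl b), inl_covBy_inl_iff.2 h⟩
  | .inr ⟨(a, b), h⟩ => ⟨(inr a, inr b), inr_covBy_inr_iff.2 h⟩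

lemma nCovers_sum [Finite α] [Finite β] :
    nCovers (inferInstance : PartialOrder (α ⊕ β)) = nCovers iα + nCovers iβ := by
  have hbij : Function.Bijective (sumCoversMap (α := α) (β := β)) := by
    constructor
    · rintro (⟨⟨a, b⟩, h⟩ | ⟨⟨a, b⟩, h⟩) (⟨⟨a', b'⟩, h'⟩ | ⟨⟨a', b'⟩, h'⟩) hf <;>
        simp only [sumCoversMap, Subtype.mk.injEq, Prod.mk.injEq, inl.injEq, inr.injEq,
          reduceCtorEq, false_and, and_false] at hf <;> simp_all
    · rintro ⟨⟨(a | a), (b | b)⟩, h⟩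
      · exact ⟨.inl ⟨(a, b), inl_covBy_inl_iff.1 h⟩, rfl⟩
      · exact absurd h not_inl_covBy_inr
      · exact absurd h not_inr_covBy_inl
      · exact ⟨.inr ⟨(a, b), inr_covBy_inr_iff.1 h⟩, rfl⟩
  calc nCovers (inferInstance : PartialOrder (α ⊕ β))
      = Nat.card ({q : α × α // q.1 ⋖ q.2} ⊕ {q : β × β // q.1 ⋖ q.2}) :=
        (Nat.card_congr (Equiv.ofBijective _ hbij)).symm
    _ = nCovers iα + nCovers iβ := Nat.card_sum

lemma noIsolated_sum :
    NoIsolated (inferInstance : PartialOrder (α ⊕ β)) ↔ NoIsolated iα ∧ NoIsolated iβ := by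
  constructor
  · intro h
    constructor
    · intro x
      obtain ⟨y, hy | hy⟩ := h (inl x)
      · rcases y with y | y
        · exact ⟨y, Or.inl (inl_covBy_inl_iff.1 hy)⟩
        · exact absurd hy not_inl_covBy_inr
      · rcases y with y | y
        · exact ⟨y, Or.inr (inl_covBy_inl_iff.1 hy)⟩
        · exact absurd hy not_inr_covBy_inl
    · intro x
      obtain ⟨y, hy | hy⟩ := h (inr x)
      · rcases y with y | y
        · exact absurd hy not_inr_covBy_inl
        · exact ⟨y, Or.inl (inr_covBy_inr_iff.1 hy)⟩
      · rcases y with y | y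
        · exact absurd hy not_inl_covBy_inr
        · exact ⟨y, Or.inr (inr_covBy_inr_iff.1 hy)⟩
  · rintro ⟨h1, h2⟩ (x | x)
    · obtain ⟨y, hy | hy⟩ := h1 x
      · exact ⟨inl y, Or.inl (inl_covBy_inl_iff.2 hy)⟩
      · exact ⟨inl y, Or.inr (inl_covBy_inl_iff.2 hy)⟩
    · obtain ⟨y, hy | hy⟩ := h2 x
      · exact ⟨inr y, Or.inl (inr_covBy_inr_iff.2 hy)⟩
      · exact ⟨inr y, Or.inr (inr_covBy_inr_iff.2 hy)⟩

end Sum2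

section Fin2
lemma covers_fin2 : ∀ q : Fin 2 × Fin 2, q.1 ⋖ q.2 → q = (0, 1) := by
  rintro ⟨a, b⟩ h
  have h2 := h.lt
  clear h
  have : a = 0 ∧ b = 1 := by revert h2; revert a b; decide
  simp [this.1, this.2]

lemma zero_covBy_one_fin2 : (0 : Fin 2) ⋖ 1 := by
  constructor
  · decide
  · intro c h1 h2; revert c; decide

lemma nCovers_fin2 : nCovers (inferInstance : PartialOrder (Fin 2)) = 1 := by
  rw [nCovers, Nat.card_eq_one_iff_unique]
  constructor
  · constructor
    rintro ⟨q, hq⟩ ⟨q', hq'⟩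
    simp [covers_fin2 q hq, covers_fin2 q' hq']
  · exact ⟨⟨(0, 1), zero_covBy_one_fin2⟩⟩

lemma noIsolated_fin2 : NoIsolated (inferInstance : PartialOrder (Fin 2)) := by
  intro x
  have : x = 0 ∨ x = 1 := by revert x; decide
  rcases this with rfl | rfl
  · exact ⟨1, Or.inl zero_covBy_one_fin2⟩
  · exact ⟨0, Or.inr zero_covBy_one_fin2⟩
end Fin2

section FreePair
variable {α β : Type*} [iα : PartialOrder α] [iβ : PartialOrder β]

/-- A free pair: `x < y` and `x, y` are comparable to nothing else. -/
def FreePair (x y : α) : Prop :=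
  x < y ∧ ∀ z, z ≠ x → z ≠ y → ¬z ≤ x ∧ ¬x ≤ z ∧ ¬z ≤ y ∧ ¬y ≤ z

lemma FreePair.map {x y : α} (e : α ≃o β) (h : FreePair x y) : FreePair (e x) (e y) := by
  refine ⟨by simpa using h.1, fun z hz1 hz2 => ?_⟩
  have h1 : e.symm z ≠ x := fun hh => hz1 (by rw [← hh]; simp)
  have h2 : e.symm z ≠ y := fun hh => hz2 (by rw [← hh]; simp)
  obtain ⟨c1, c2, c3, c4⟩ := h.2 _ h1 h2
  exact ⟨fun hle => c1 (by simpa using e.symm.monotone hle),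
    fun hle => c2 (by simpa using e.symm.monotone hle),
    fun hle => c3 (by simpa using e.symm.monotone hle),
    fun hle => c4 (by simpa using e.symm.monotone hle)⟩

lemma freePair_inr01 : FreePair (inr 0 : α ⊕ Fin 2) (inr 1) := by
  refine ⟨inr_lt_inr_iff.2 (by decide), ?_⟩
  rintro (z | i) hz1 hz2
  · exact ⟨by simp, by simp, by simp, by simp⟩
  · rcases (by decide : ∀ j : Fin 2, j = 0 ∨ j = 1) i with rfl | rfl
    · exact absurd rfl hz1
    · exact absurd rfl hz2

variable [DecidableEq α]

def swapFun (x x' y y' : α) (z : α) : α :=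
  if z = x then x' else if z = x' then x else if z = y then y' else if z = y' then y else z

variable {x x' y y' : α}

lemma swapFun_eval1 : swapFun x x' y y' x = x' := by simp [swapFun]

lemma swapFun_eval2 (h1 : x' ≠ x) : swapFun x x' y y' x' = x := by simp [swapFun, h1]

lemma swapFun_eval3 (h1 : y ≠ x) (h2 : y ≠ x') : swapFun x x' y y' y = y' := by
  simp [swapFun, h1, h2]

lemma swapFun_eval4 (h1 : y' ≠ x) (h2 : y' ≠ x') (h3 : y' ≠ y) :
    swapFun x x' y y' y' = y := by simp [swapFun, h1, h2, h3]

lemma swapFun_eval5 {z : α} (hz : z ≠ x) (hz2 : z ≠ x') (hz3 : z ≠ y) (hz4 : z ≠ y') :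
    swapFun x x' y y' z = z := by simp [swapFun, hz, hz2, hz3, hz4]

lemma swapFun_invol (hxy : x ≠ y) (hxx : x ≠ x') (hxy' : x ≠ y')
    (hx'y : x' ≠ y) (hx'y' : x' ≠ y') (hyy' : y ≠ y') :
    Function.Involutive (swapFun x x' y y') := by
  intro z
  by_cases hz1 : z = x
  · subst hz1; rw [swapFun_eval1, swapFun_eval2 hxx.symm]
  by_cases hz2 : z = x'
  · subst hz2; rw [swapFun_eval2 hxx.symm, swapFun_eval1]
  by_cases hz3 : z = y
  · subst hz3
    rw [swapFun_eval3 hz1 hz2, swapFun_eval4 hxy'.symm hx'y'.symm hyy'.symm]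
  by_cases hz4 : z = y'
  · subst hz4
    rw [swapFun_eval4 hz1 hz2 hyy'.symm, swapFun_eval3 hxy.symm hx'y.symm]
  · rw [swapFun_eval5 hz1 hz2 hz3 hz4, swapFun_eval5 hz1 hz2 hz3 hz4]

lemma swapFun_mono (h : FreePair x y) (h' : FreePair x' y')
    (d1 : x ≠ x') (d2 : x ≠ y') (d3 : y ≠ x') (d4 : y ≠ y') :
    ∀ u v : α, u ≤ v → swapFun x x' y y' u ≤ swapFun x x' y y' v := by
  have hxy : x ≠ y := h.1.ne
  have hx'y' : x' ≠ y' := h'.1.ne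
  intro u v huv
  by_cases hux : u = x
  · rw [hux] at huv ⊢
    have hv : v = x ∨ v = y := by
      by_contra hc
      push_neg at hc
      exact (h.2 v hc.1 hc.2).2.1 huv
    rcases hv with hv | hv
    · rw [hv]
    · rw [hv, swapFun_eval1, swapFun_eval3 hxy.symm d3]
      exact h'.1.le
  by_cases huy : u = y
  · rw [huy] at huv ⊢
    have hv : v = x ∨ v = y := by
      by_contra hc
      push_neg at hc
      exact (h.2 v hc.1 hc.2).2.2.2 huv
    rcases hv with hv | hv
    · rw [hv] at huv
      exact absurd huv h.1.not_ge
    · rw [hv]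
  by_cases hux' : u = x'
  · rw [hux'] at huv ⊢
    have hv : v = x' ∨ v = y' := by
      by_contra hc
      push_neg at hc
      exact (h'.2 v hc.1 hc.2).2.1 huv
    rcases hv with hv | hv
    · rw [hv]
    · rw [hv, swapFun_eval2 d1.symm, swapFun_eval4 d2.symm hx'y'.symm d4.symm]
      exact h.1.le
  by_cases huy' : u = y'
  · rw [huy'] at huv ⊢
    have hv : v = x' ∨ v = y' := by
      by_contra hc
      push_neg at hc
      exact (h'.2 v hc.1 hc.2).2.2.2 huv
    rcases hv with hv | hv
    · rw [hv] at huv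
      exact absurd huv h'.1.not_ge
    · rw [hv]
  · rw [swapFun_eval5 hux hux' huy huy']
    by_cases hvx : v = x
    · rw [hvx] at huv
      exact absurd huv (h.2 u hux huy).1
    by_cases hvy : v = y
    · rw [hvy] at huv
      exact absurd huv (h.2 u hux huy).2.2.1
    by_cases hvx' : v = x'
    · rw [hvx'] at huv
      exact absurd huv (h'.2 u hux' huy').1
    by_cases hvy' : v = y'
    · rw [hvy'] at huv
      exact absurd huv (h'.2 u hux' huy').2.2.1
    · rw [swapFun_eval5 hvx hvx' hvy hvy']
      exact huv

noncomputable def freePairSwapIso (h : FreePair x y) (h' : FreePair x' y')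
    (d1 : x ≠ x') (d2 : x ≠ y') (d3 : y ≠ x') (d4 : y ≠ y') : α ≃o α where
  toEquiv := ⟨swapFun x x' y y', swapFun x x' y y',
    (swapFun_invol h.1.ne d1 d2 d3.symm h'.1.ne d4).leftInverse,
    (swapFun_invol h.1.ne d1 d2 d3.symm h'.1.ne d4).rightInverse⟩
  map_rel_iff' := by
    intro u v
    simp only [Equiv.coe_fn_mk]
    constructor
    · intro hh
      have := swapFun_mono h h' d1 d2 d3 d4 _ _ hh
      rwa [swapFun_invol h.1.ne d1 d2 d3.symm h'.1.ne d4 u,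
        swapFun_invol h.1.ne d1 d2 d3.symm h'.1.ne d4 v] at this
    · exact swapFun_mono h h' d1 d2 d3 d4 u v

lemma freePairSwapIso_apply_x (h : FreePair x y) (h' : FreePair x' y')
    (d1 : x ≠ x') (d2 : x ≠ y') (d3 : y ≠ x') (d4 : y ≠ y') :
    freePairSwapIso h h' d1 d2 d3 d4 x = x' := swapFun_eval1

lemma freePairSwapIso_apply_y (h : FreePair x y) (h' : FreePair x' y')
    (d1 : x ≠ x') (d2 : x ≠ y') (d3 : y ≠ x') (d4 : y ≠ y') :
    freePairSwapIso h h' d1 d2 d3 d4 y = y' := swapFun_eval3 h.1.ne.symm d3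

end FreePair

section Split
variable {α : Type*} [iα : PartialOrder α] [DecidableEq α] {x y : α}

noncomputable def freePairSplitIso (h : FreePair x y) :
    ({z : α // z ≠ x ∧ z ≠ y} ⊕ Fin 2) ≃o α where
  toEquiv :=
  { toFun := Sum.elim (fun z => z.1) (fun i => if i = 0 then x else y)
    invFun := fun z =>
      if hx : z = x then inr 0 else if hy : z = y then inr 1 else inl ⟨z, hx, hy⟩
    left_inv := by
      rintro (⟨z, hz1, hz2⟩ | i)
      · simp [hz1, hz2]
      · rcases (by decide : ∀ j : Fin 2, j = 0 ∨ j = 1) i with rfl | rfl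
        · simp
        · simp [h.1.ne.symm, (by decide : (1 : Fin 2) ≠ 0)]
    right_inv := by
      intro z
      by_cases hx : z = x
      · simp [hx]
      by_cases hy : z = y
      · simp [hx, hy, h.1.ne.symm, (by decide : (1 : Fin 2) ≠ 0)]
      · simp [hx, hy] }
  map_rel_iff' := by
    rintro (z | i) (w | j) <;>
      simp only [Equiv.coe_fn_mk, Sum.elim_inl, Sum.elim_inr]
    · rw [Sum.inl_le_inl_iff, ← Subtype.coe_le_coe]
    · constructor
      · intro hh
        rcases (by decide : ∀ j : Fin 2, j = 0 ∨ j = 1) j with rfl | rfl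
        · simp only [if_pos rfl] at hh
          exact absurd hh (h.2 z.1 z.2.1 z.2.2).1
        · rw [if_neg (by decide : (1 : Fin 2) ≠ 0)] at hh
          exact absurd hh (h.2 z.1 z.2.1 z.2.2).2.2.1
      · intro hh
        exact absurd hh not_inl_le_inr
    · constructor
      · intro hh
        rcases (by decide : ∀ j : Fin 2, j = 0 ∨ j = 1) i with rfl | rfl
        · simp only [if_pos rfl] at hh
          exact absurd hh (h.2 w.1 w.2.1 w.2.2).2.1
        · rw [if_neg (by decide : (1 : Fin 2) ≠ 0)] at hh
          exact absurd hh (h.2 w.1 w.2.1 w.2.2).2.2.2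
      · intro hh
        exact absurd hh not_inr_le_inl
    · rcases (by decide : ∀ j : Fin 2, j = 0 ∨ j = 1) i with rfl | rfl <;>
        rcases (by decide : ∀ j : Fin 2, j = 0 ∨ j = 1) j with rfl | rfl
      · simp
      · simp only [if_pos rfl, if_neg (by decide : (1 : Fin 2) ≠ 0)]
        exact iff_of_true h.1.le (inr_le_inr_iff.2 (by decide))
      · simp only [if_pos rfl, if_neg (by decide : (1 : Fin 2) ≠ 0)]
        exact iff_of_false h.1.not_ge
          (fun hh => absurd (inr_le_inr_iff.1 hh) (by decide))
      · simp
end Split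

section Counting
open Finset
variable {α : Type*} [Fintype α] [DecidableEq α] [iα : PartialOrder α]

lemma exists_freePair {p a : ℕ} (hcard : Fintype.card α = p + 2)
    (hcov : nCovers iα = a + 1) (hiso : NoIsolated iα) (hpa : 3 * a ≤ 2 * p) :
    ∃ x y : α, FreePair x y := by
  classical
  set A : Finset (α × α) := univ.filter (fun q => q.1 ⋖ q.2) with hA
  have hmemA : ∀ q : α × α, q ∈ A ↔ q.1 ⋖ q.2 := by
    intro q; simp [hA]
  have hAcard : A.card = a + 1 := by
    rw [← hcov, nCovers, Nat.card_eq_fintype_card, Fintype.card_subtype]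
  set deg : α → ℕ := fun z => (A.filter (fun q => q.1 = z ∨ q.2 = z)).card with hdeg
  have hne : ∀ q ∈ A, q.1 ≠ q.2 := fun q hq => ((hmemA q).1 hq).lt.ne
  have hsum : ∑ z : α, deg z = A.card * 2 := by
    calc ∑ z : α, deg z
        = ∑ z : α, ∑ q ∈ A, if q.1 = z ∨ q.2 = z then 1 else 0 := by
          refine Finset.sum_congr rfl fun z _ => ?_
          rw [hdeg]
          exact card_filter _ _
      _ = ∑ q ∈ A, ∑ z : α, if q.1 = z ∨ q.2 = z then 1 else 0 := Finset.sum_comm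
      _ = ∑ q ∈ A, 2 := by
          refine Finset.sum_congr rfl fun q hq => ?_
          rw [← card_filter]
          have hq2 : univ.filter (fun z => q.1 = z ∨ q.2 = z) = {q.1, q.2} := by
            ext z
            simp only [mem_filter, mem_univ, true_and, mem_insert, mem_singleton]
            constructor
            · rintro (h | h) <;> [left; right] <;> exact h.symm
            · rintro (h | h) <;> [left; right] <;> exact h.symm
          rw [hq2, card_pair (hne q hq)]
      _ = A.card * 2 := by rw [Finset.sum_const, smul_eq_mul]
  have harc : ∀ z : α, ∃ q, q ∈ A ∧ (q.1 = z ∨ q.2 = z) := by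
    intro z
    obtain ⟨w, hw | hw⟩ := hiso z
    · exact ⟨(z, w), (hmemA _).2 hw, Or.inl rfl⟩
    · exact ⟨(w, z), (hmemA _).2 hw, Or.inr rfl⟩
  have hdegpos : ∀ z : α, 1 ≤ deg z := by
    intro z
    obtain ⟨q, hq1, hq2⟩ := harc z
    exact card_pos.2 ⟨q, mem_filter.2 ⟨hq1, hq2⟩⟩
  set D : Finset α := univ.filter (fun z => deg z = 1) with hD
  have hDcard : a + 2 ≤ D.card := by
    have hsplit : ∑ z ∈ D, deg z + ∑ z ∈ univ.filter (fun z => ¬deg z = 1), deg z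
        = ∑ z : α, deg z := Finset.sum_filter_add_sum_filter_not _ _ _
    have h1 : ∑ z ∈ D, deg z = D.card := by
      rw [Finset.sum_congr rfl (fun z hz => (mem_filter.1 hz).2), Finset.sum_const,
        smul_eq_mul, mul_one]
    have h2 : (univ.filter (fun z => ¬deg z = 1)).card * 2
        ≤ ∑ z ∈ univ.filter (fun z => ¬deg z = 1), deg z := by
      rw [← smul_eq_mul]
      refine Finset.card_nsmul_le_sum _ _ _ fun z hz => ?_
      have := hdegpos z
      have := (mem_filter.1 hz).2
      omega
    have h3 : D.card + (univ.filter (fun z => ¬deg z = 1)).card = p + 2 := by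
      rw [← hcard, hD]
      exact Finset.card_filter_add_card_filter_not _
    omega
  choose f hf1 hf2 using harc
  have hlt : A.card < D.card := by omega
  obtain ⟨z1, hz1, z2, hz2, hne12, heq⟩ :=
    Finset.exists_ne_map_eq_of_card_lt_of_maps_to hlt (fun z _ => hf1 z)
  set q : α × α := f z1 with hq
  have hqA : q ∈ A := hf1 z1
  have hxy : q.1 ⋖ q.2 := (hmemA q).1 hqA
  have hc1 : q.1 = z1 ∨ q.2 = z1 := hf2 z1
  have hc2 : q.1 = z2 ∨ q.2 = z2 := by rw [heq]; exact hf2 z2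
  have hqD : deg q.1 = 1 ∧ deg q.2 = 1 := by
    have d1 : deg z1 = 1 := (mem_filter.1 hz1).2
    have d2 : deg z2 = 1 := (mem_filter.1 hz2).2
    rcases hc1 with h1 | h1 <;> rcases hc2 with h2 | h2
    · exact absurd (h1.symm.trans h2) hne12
    · exact ⟨h1 ▸ d1, h2 ▸ d2⟩
    · exact ⟨h2 ▸ d2, h1 ▸ d1⟩
    · exact absurd (h1.symm.trans h2) hne12
  -- uniqueness of the arc through a degree-one point
  have huniq : ∀ z : α, deg z = 1 → ∀ q' ∈ A, (q'.1 = z ∨ q'.2 = z) →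
      ∀ q'' ∈ A, (q''.1 = z ∨ q''.2 = z) → q' = q'' := by
    intro z hz q' hq' hq'z q'' hq'' hq''z
    have hle : (A.filter (fun r => r.1 = z ∨ r.2 = z)).card ≤ 1 := le_of_eq hz
    exact Finset.card_le_one.1 hle _ (mem_filter.2 ⟨hq', hq'z⟩) _ (mem_filter.2 ⟨hq'', hq''z⟩)
  set x := q.1
  set y := q.2
  have hxuniq : ∀ q' ∈ A, (q'.1 = x ∨ q'.2 = x) → q' = (x, y) := by
    intro q' hq' hq'x
    exact huniq x hqD.1 q' hq' hq'x (x, y) hqA (Or.inl rfl)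
  have hyuniq : ∀ q' ∈ A, (q'.1 = y ∨ q'.2 = y) → q' = (x, y) := by
    intro q' hq' hq'y
    exact huniq y hqD.2 q' hq' hq'y (x, y) hqA (Or.inr rfl)
  have hxyne : x ≠ y := hxy.lt.ne
  refine ⟨x, y, hxy.lt, fun z hzx hzy => ?_⟩
  have c1 : ¬z ≤ x := by
    intro hle
    obtain ⟨w, hw1, hw2⟩ := exists_le_covBy_of_lt (hle.lt_of_ne hzx)
    have := hxuniq (w, x) ((hmemA _).2 hw2) (Or.inr rfl)
    rw [Prod.mk.injEq] at this
    exact hxyne this.2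
  have c2 : ¬x ≤ z := by
    intro hle
    obtain ⟨w, hw1, hw2⟩ := exists_covBy_le_of_lt (lt_of_le_of_ne hle (Ne.symm hzx))
    have hw3 := hxuniq (x, w) ((hmemA _).2 hw1) (Or.inl rfl)
    rw [Prod.mk.injEq] at hw3
    have hyz : y < z := lt_of_le_of_ne (hw3.2 ▸ hw2) (Ne.symm hzy)
    obtain ⟨w', hw'1, hw'2⟩ := exists_covBy_le_of_lt hyz
    have := hyuniq (y, w') ((hmemA _).2 hw'1) (Or.inl rfl)
    rw [Prod.mk.injEq] at this
    exact hxyne this.1.symm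
  have c3 : ¬z ≤ y := by
    intro hle
    obtain ⟨w, hw1, hw2⟩ := exists_le_covBy_of_lt (hle.lt_of_ne hzy)
    have hw3 := hyuniq (w, y) ((hmemA _).2 hw2) (Or.inr rfl)
    rw [Prod.mk.injEq] at hw3
    exact c1 (hw3.1 ▸ hw1)
  have c4 : ¬y ≤ z := by
    intro hle
    obtain ⟨w, hw1, hw2⟩ := exists_covBy_le_of_lt
      (lt_of_le_of_ne hle (Ne.symm hzy))
    have := hyuniq (y, w) ((hmemA _).2 hw1) (Or.inl rfl)
    rw [Prod.mk.injEq] at this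
    exact hxyne this.1.symm
  exact ⟨c1, c2, c3, c4⟩
end Counting

section Cancel
variable {α β : Type*} [iα : PartialOrder α] [iβ : PartialOrder β]

lemma cancel_aux (e : (α ⊕ Fin 2) ≃o (β ⊕ Fin 2))
    (h0 : e (inr 0) = inr 0) (h1 : e (inr 1) = inr 1) : Nonempty (α ≃o β) := by
  have h0' : e.symm (inr 0) = inr 0 := by rw [← h0]; simp
  have h1' : e.symm (inr 1) = inr 1 := by rw [← h1]; simp
  have hL : ∀ a : α, ∃ b : β, e (inl a) = inl b := by
    intro a
    rcases he : e (inl a) with b | i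
    · exact ⟨b, rfl⟩
    · rcases (by decide : ∀ j : Fin 2, j = 0 ∨ j = 1) i with rfl | rfl
      · exact absurd (e.injective (he.trans h0.symm)) (by simp)
      · exact absurd (e.injective (he.trans h1.symm)) (by simp)
  have hR : ∀ b : β, ∃ a : α, e.symm (inl b) = inl a := by
    intro b
    rcases he : e.symm (inl b) with a | i
    · exact ⟨a, rfl⟩
    · rcases (by decide : ∀ j : Fin 2, j = 0 ∨ j = 1) i with rfl | rfl
      · exact absurd (e.symm.injective (he.trans h0'.symm)) (by simp)
      · exact absurd (e.symm.injective (he.trans h1'.symm)) (by simp)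
  choose F hF using hL
  choose G hG using hR
  refine ⟨{ toFun := F, invFun := G, left_inv := ?_, right_inv := ?_, map_rel_iff' := ?_ }⟩
  · intro a
    have h2 : e.symm (inl (F a)) = inl a := by rw [← hF]; simp
    exact inl_injective ((hG (F a)).symm.trans h2)
  · intro b
    have h2 : e (inl (G b)) = inl b := by rw [← hG]; simp
    exact inl_injective ((hF (G b)).symm.trans h2)
  · intro a a'
    have h2 : (inl (F a) : β ⊕ Fin 2) ≤ inl (F a') ↔ (inl a : α ⊕ Fin 2) ≤ inl a' := by
      rw [← hF a, ← hF a']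
      exact e.map_rel_iff
    simpa using h2

lemma cancel (e : (α ⊕ Fin 2) ≃o (β ⊕ Fin 2)) : Nonempty (α ≃o β) := by
  classical
  have hfp : FreePair (e (inr 0)) (e (inr 1)) := freePair_inr01.map e
  rcases he0 : e (inr 0) with b0 | i0
  · rcases he1 : e (inr 1) with b1 | i1
    · rw [he0, he1] at hfp
      have hfp2 : FreePair (inr 0 : β ⊕ Fin 2) (inr 1) := freePair_inr01
      have d1 : (inl b0 : β ⊕ Fin 2) ≠ inr 0 := by simp
      have d2 : (inl b0 : β ⊕ Fin 2) ≠ inr 1 := by simp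
      have d3 : (inl b1 : β ⊕ Fin 2) ≠ inr 0 := by simp
      have d4 : (inl b1 : β ⊕ Fin 2) ≠ inr 1 := by simp
      refine cancel_aux (e.trans (freePairSwapIso hfp hfp2 d1 d2 d3 d4)) ?_ ?_
      · rw [OrderIso.trans_apply, he0]
        exact freePairSwapIso_apply_x hfp hfp2 d1 d2 d3 d4
      · rw [OrderIso.trans_apply, he1]
        exact freePairSwapIso_apply_y hfp hfp2 d1 d2 d3 d4
    · have hlt : e (inr 0) < e (inr 1) := e.strictMono (inr_lt_inr_iff.2 (by decide))
      rw [he0, he1] at hlt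
      exact absurd hlt (by simp)
  · rcases (by decide : ∀ j : Fin 2, j = 0 ∨ j = 1) i0 with rfl | rfl
    · have hv : e (inr 1) = inr 1 := by
        rw [he0] at hfp
        by_contra hne
        have hne0 : e (inr 1) ≠ inr 0 := by
          intro hh
          exact absurd (e.injective (hh.trans he0.symm)) (by simp)
        obtain ⟨c1, c2, c3, c4⟩ := (freePair_inr01 (α := β)).2 (e (inr 1)) hne0 hne
        exact c2 hfp.1.le
      exact cancel_aux e he0 hv
    · rw [he0] at hfp
      have hvne1 : e (inr 1) ≠ inr 1 := hfp.1.ne'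
      have hvne0 : e (inr 1) ≠ inr 0 := by
        intro hh
        rw [hh] at hfp
        exact absurd (inr_lt_inr_iff.1 hfp.1) (by decide)
      obtain ⟨c1, c2, c3, c4⟩ := (freePair_inr01 (α := β)).2 _ hvne0 hvne1
      exact absurd hfp.1.le c4
end Cancel

section Lift
variable {α β : Type*}

/-- Pulling back an order along an equivalence gives an order isomorphism. -/
def liftIso [iβ : PartialOrder β] (e : α ≃ β) :
    @OrderIso α β (PartialOrder.lift (e : α → β) e.injective).toPreorder.toLE
      iβ.toPreorder.toLE :=
  ⟨e, Iff.rfl⟩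

def sumCongrFin2 [iα : PartialOrder α] [iβ : PartialOrder β] (e : α ≃o β) :
    (α ⊕ Fin 2) ≃o (β ⊕ Fin 2) where
  toEquiv := Equiv.sumCongr e.toEquiv (Equiv.refl _)
  map_rel_iff' := by
    rintro (a | i) (b | j) <;>
      simp only [Equiv.sumCongr_apply, Sum.map_inl, Sum.map_inr, Equiv.refl_apply,
        id_eq, inl_le_inl_iff, inr_le_inr_iff] <;>
      simp [e.map_rel_iff]
end Lift

section AddPair

def addPairOrder {p : ℕ} (P : PartialOrder (Fin p)) : PartialOrder (Fin (p + 2)) :=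
  @PartialOrder.lift _ _ (@Sum.instPartialOrder (Fin p) (Fin 2) P _)
    (finSumFinEquiv.symm : Fin (p + 2) → Fin p ⊕ Fin 2) finSumFinEquiv.symm.injective

def addPairIso {p : ℕ} (P : PartialOrder (Fin p)) :
    @OrderIso (Fin p ⊕ Fin 2) (Fin (p + 2))
      (@Sum.instPartialOrder (Fin p) (Fin 2) P _).toPreorder.toLE
      (addPairOrder P).toPreorder.toLE :=
  @OrderIso.symm (Fin (p + 2)) (Fin p ⊕ Fin 2)
    (addPairOrder P).toPreorder.toLE
    (@Sum.instPartialOrder (Fin p) (Fin 2) P _).toPreorder.toLE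
    (@liftIso (Fin (p + 2)) (Fin p ⊕ Fin 2)
      (@Sum.instPartialOrder (Fin p) (Fin 2) P _) finSumFinEquiv.symm)

lemma nCovers_addPair {p : ℕ} (P : PartialOrder (Fin p)) :
    nCovers (addPairOrder P) = nCovers P + 1 := by
  have h1 := @nCovers_congr (Fin p ⊕ Fin 2) (Fin (p + 2))
    (@Sum.instPartialOrder (Fin p) (Fin 2) P _) (addPairOrder P) (addPairIso P)
  have h2 := @nCovers_sum (Fin p) (Fin 2) P _ _ _
  rw [← h1, h2, nCovers_fin2]

lemma noIsolated_addPair {p : ℕ} (P : PartialOrder (Fin p)) :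
    NoIsolated (addPairOrder P) ↔ NoIsolated P := by
  have h1 := @noIsolated_congr (Fin p ⊕ Fin 2) (Fin (p + 2))
    (@Sum.instPartialOrder (Fin p) (Fin 2) P _) (addPairOrder P) (addPairIso P)
  have h2 := @noIsolated_sum (Fin p) (Fin 2) P _
  rw [← h1, h2]
  simp [noIsolated_fin2]

end AddPair

section Decomp
open Finset

lemma exists_decomp {α : Type*} [Fintype α] [DecidableEq α] [iα : PartialOrder α] {p a : ℕ}
    (hcard : Fintype.card α = p + 2) (hcov : nCovers iα = a + 1) (hiso : NoIsolated iα)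
    (hpa : 3 * a ≤ 2 * p) :
    ∃ P : PartialOrder (Fin p), nCovers P = a ∧ NoIsolated P ∧
      Nonempty (@OrderIso (Fin p ⊕ Fin 2) α
        (@Sum.instLESum (Fin p) (Fin 2) P.toPreorder.toLE _) iα.toPreorder.toLE) := by
  obtain ⟨x, y, hfp⟩ := exists_freePair hcard hcov hiso hpa
  have hscard : Fintype.card {z : α // z ≠ x ∧ z ≠ y} = p := by
    rw [Fintype.card_subtype]
    have h1 : univ.filter (fun z : α => z ≠ x ∧ z ≠ y) = univ \ {x, y} := by
      ext z
      simp [not_or]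
    rw [h1, card_sdiff_of_subset (subset_univ _), card_pair hfp.1.ne, card_univ, hcard]
    omega
  set c : Fin p ≃ {z : α // z ≠ x ∧ z ≠ y} := (Fintype.equivFinOfCardEq hscard).symm with hc
  set P : PartialOrder (Fin p) := PartialOrder.lift (c : _ → _) c.injective with hP
  have e1 : @OrderIso (Fin p) {z : α // z ≠ x ∧ z ≠ y} P.toPreorder.toLE _ := liftIso c
  have e2 : ({z : α // z ≠ x ∧ z ≠ y} ⊕ Fin 2) ≃o α := freePairSplitIso hfp
  have e3 := @sumCongrFin2 (Fin p) {z : α // z ≠ x ∧ z ≠ y} P _ e1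
  have e4 := @OrderIso.trans (Fin p ⊕ Fin 2) ({z : α // z ≠ x ∧ z ≠ y} ⊕ Fin 2) α
    (@Sum.instLESum (Fin p) (Fin 2) P.toPreorder.toLE _) _ iα.toPreorder.toLE e3 e2
  have hncov : nCovers P = a := by
    have h1 := @nCovers_congr (Fin p ⊕ Fin 2) α
      (@Sum.instPartialOrder (Fin p) (Fin 2) P _) iα e4
    have h2 := @nCovers_sum (Fin p) (Fin 2) P _ _ _
    rw [h2, nCovers_fin2, hcov] at h1
    omega
  have hnoiso : NoIsolated P := by
    have h1 := @noIsolated_congr (Fin p ⊕ Fin 2) α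
      (@Sum.instPartialOrder (Fin p) (Fin 2) P _) iα e4
    have h2 := @noIsolated_sum (Fin p) (Fin 2) P _
    rw [h2] at h1
    exact (h1.2 hiso).1
  exact ⟨P, hncov, hnoiso, ⟨e4⟩⟩
end Decomp

/-- For `2p ≥ 3a`, `H₀ (p+2) (a+1) = H₀ p a`; consequently `H₀ (2a - n) a`
does not depend on `a` as long as `a ≥ 2n`. -/
theorem H0_stable :
    (∀ p a : ℕ, 3 * a ≤ 2 * p → H0 (p + 2) (a + 1) = H0 p a) ∧
    (∀ n a b : ℕ, 2 * n ≤ a → 2 * n ≤ b → H0 (2 * a - n) a = H0 (2 * b - n) b) := by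
  have main : ∀ p a : ℕ, 3 * a ≤ 2 * p → H0 (p + 2) (a + 1) = H0 p a := by
    intro p a hpa
    classical
    let F : {P : PartialOrder (Fin p) // nCovers P = a ∧ NoIsolated P} →
        {P : PartialOrder (Fin (p + 2)) // nCovers P = a + 1 ∧ NoIsolated P} := fun P =>
      ⟨addPairOrder P.1, by rw [nCovers_addPair, P.2.1], (noIsolated_addPair P.1).2 P.2.2⟩
    have hresp : ∀ P Q : {P : PartialOrder (Fin p) // nCovers P = a ∧ NoIsolated P},
        ((posetIsoSetoid p).comap Subtype.val).r P Q →
        ((posetIsoSetoid (p + 2)).comap Subtype.val).r (F P) (F Q) := by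
      rintro P Q ⟨e⟩
      have i1 := @OrderIso.symm (Fin p ⊕ Fin 2) (Fin (p + 2))
        (@Sum.instPartialOrder (Fin p) (Fin 2) P.1 _).toPreorder.toLE
        (addPairOrder P.1).toPreorder.toLE (addPairIso P.1)
      have i2 := @sumCongrFin2 (Fin p) (Fin p) P.1 Q.1 e
      have i3 := addPairIso Q.1
      exact ⟨@OrderIso.trans (Fin (p + 2)) (Fin p ⊕ Fin 2) (Fin (p + 2))
        (addPairOrder P.1).toPreorder.toLE
        (@Sum.instLESum (Fin p) (Fin 2) P.1.toPreorder.toLE _)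
        (addPairOrder Q.1).toPreorder.toLE i1
        (@OrderIso.trans (Fin p ⊕ Fin 2) (Fin p ⊕ Fin 2) (Fin (p + 2))
          (@Sum.instLESum (Fin p) (Fin 2) P.1.toPreorder.toLE _)
          (@Sum.instLESum (Fin p) (Fin 2) Q.1.toPreorder.toLE _)
          (addPairOrder Q.1).toPreorder.toLE i2 i3)⟩
    let G := Quotient.map F hresp
    have hinj : Function.Injective G := by
      intro q1 q2
      refine Quotient.inductionOn₂ q1 q2 ?_
      intro P Q h
      have h2 : ((posetIsoSetoid (p + 2)).comap Subtype.val).r (F P) (F Q) :=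
        Quotient.exact h
      obtain ⟨e⟩ := h2
      have i1 := addPairIso P.1
      have i2 := @OrderIso.symm (Fin p ⊕ Fin 2) (Fin (p + 2))
        (@Sum.instPartialOrder (Fin p) (Fin 2) Q.1 _).toPreorder.toLE
        (addPairOrder Q.1).toPreorder.toLE (addPairIso Q.1)
      have etot := @OrderIso.trans (Fin p ⊕ Fin 2) (Fin (p + 2)) (Fin p ⊕ Fin 2)
        (@Sum.instLESum (Fin p) (Fin 2) P.1.toPreorder.toLE _)
        (addPairOrder P.1).toPreorder.toLE
        (@Sum.instLESum (Fin p) (Fin 2) Q.1.toPreorder.toLE _) i1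
        (@OrderIso.trans (Fin (p + 2)) (Fin (p + 2)) (Fin p ⊕ Fin 2)
          (addPairOrder P.1).toPreorder.toLE (addPairOrder Q.1).toPreorder.toLE
          (@Sum.instLESum (Fin p) (Fin 2) Q.1.toPreorder.toLE _) e i2)
      obtain ⟨e'⟩ := @cancel (Fin p) (Fin p) P.1 Q.1 etot
      exact Quotient.sound ⟨e'⟩
    have hsurj : Function.Surjective G := by
      intro q
      refine Quotient.inductionOn q ?_
      intro Q
      obtain ⟨P, h1, h2, ⟨e⟩⟩ := @exists_decomp (Fin (p + 2)) _ _ Q.1 p a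
        (by simp) Q.2.1 Q.2.2 hpa
      refine ⟨Quotient.mk _ ⟨P, h1, h2⟩, ?_⟩
      have i1 := @OrderIso.symm (Fin p ⊕ Fin 2) (Fin (p + 2))
        (@Sum.instPartialOrder (Fin p) (Fin 2) P _).toPreorder.toLE
        (addPairOrder P).toPreorder.toLE (addPairIso P)
      have iso := @OrderIso.trans (Fin (p + 2)) (Fin p ⊕ Fin 2) (Fin (p + 2))
        (addPairOrder P).toPreorder.toLE
        (@Sum.instLESum (Fin p) (Fin 2) P.toPreorder.toLE _)
        Q.1.toPreorder.toLE i1 e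
      exact Quotient.sound ⟨iso⟩
    have hcardeq := Nat.card_congr (Equiv.ofBijective G ⟨hinj, hsurj⟩)
    rw [H0, H0]
    exact hcardeq.symm
  refine ⟨main, ?_⟩
  have aux : ∀ n a : ℕ, 2 * n ≤ a → H0 (2 * a - n) a = H0 (2 * (2 * n) - n) (2 * n) := by
    intro n a ha
    induction a, ha using Nat.le_induction with
    | base => rfl
    | succ a ha ih =>
      have hstep : H0 (2 * (a + 1) - n) (a + 1) = H0 (2 * a - n) a := by
        have h1 : 2 * (a + 1) - n = (2 * a - n) + 2 := by omega
        rw [h1]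
        exact main (2 * a - n) a (by omega)
      rw [hstep, ih]
  intro n a b ha hb
  rw [aux n a ha, aux n b hb]
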